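/- arXiv:2412.20436 — 2 statements merged into one kernel-verified Lean document; each statement's English description precedes it below -/
import Mathlib

section
/- Let Z be a measurable space, μ0 and μ1 probability measures on Z, π ∈ [0,1], B > 0, and ℓ0, ℓ1 : Z → ℝ bounded measurable functions. Let F be a countable family of measurable functions on Z with sup_{f ∈ F} sup_{z ∈ Z} |f(z)| ≤ ν < ∞ and such that (1/B)·ℓ0 ∈ F and (1/B)·ℓ1 ∈ F. Let Z^0_1, …, Z^0_n be i.i.d. with law μ0 and Z^1_1, …, Z^1_m be i.i.d. with law μ1, all mutually independent, with empirical measures μ̂0_n and μ̂1_m. Then with probability at least 1 − δ, ε_test ≤ ε_train + 2π(1−π)·B·[ IPM_F(μ̂0_n, μ̂1_m) + 2 R_m^{μ1}(F) + 2 R_n^{μ0}(F) + √(18 ν² log(4/δ)) · (1/√m + 1/√n) ]. -/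
/-!
Put `fⱼ = ℓⱼ / B ∈ F`. Expanding the mixture `μ̄ = π μ₁ + (1 - π) μ₀` gives
`ε_test - ε_train = π (1 - π) B ((∫ f₁ dμ₀ - ∫ f₁ dμ₁) - (∫ f₀ dμ₀ - ∫ f₀ dμ₁))`,
and each gap `|∫ f dμ₀ - ∫ f dμ₁|` is at most `IPM_F(μ̂₀, μ̂₁)` plus the deviations of the two
empirical means of `f` from their expectations. Only the two fixed functions `f₀, f₁` enter, so no
uniform deviation bound over `F` is needed: Hoeffding's inequality controls each of the four
deviations by `√(18 ν² log (4/δ)) / √k` outside an event of probability `δ / 4`, and the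
nonnegative Rademacher terms only loosen the bound.
-/

open MeasureTheory

/-- Integral probability metric for a family `F` of real-valued functions. -/
noncomputable def IPM {X : Type*} [MeasurableSpace X] (F : Set (X → ℝ))
    (p q : Measure X) : ℝ :=
  sSup ((fun f => |(∫ x, f x ∂p) - ∫ x, f x ∂q|) '' F)

/-- Empirical measure of the samples `x 0, …, x (m-1)`. -/
noncomputable def empMeasure {X : Type*} [MeasurableSpace X] {m : ℕ}
    (x : Fin m → X) : Measure X :=
  (m : ENNReal)⁻¹ • ∑ i : Fin m, Measure.dirac (x i)

/-- Rademacher complexity of `F` with respect to `μ` and `m` samples: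
the Rademacher signs are encoded by i.i.d. uniform Booleans. -/
noncomputable def rademacher {X : Type*} [MeasurableSpace X] (μ : Measure X)
    (m : ℕ) (F : Set (X → ℝ)) : ℝ :=
  ∫ ω : (Fin m → X) × (Fin m → Bool),
    sSup ((fun f =>
      |(m : ℝ)⁻¹ * ∑ i : Fin m, (if ω.2 i then (1 : ℝ) else -1) * f (ω.1 i)|) '' F)
    ∂((Measure.pi fun _ => μ).prod
        (Measure.pi fun _ => (PMF.uniformOfFintype Bool).toMeasure))

open ProbabilityTheory

section

variable {Z : Type*} [MeasurableSpace Z]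

lemma integral_empMeasure {k : ℕ} (x : Fin k → Z) {f : Z → ℝ} (hf : Measurable f) :
    ∫ z, f z ∂empMeasure x = (k : ℝ)⁻¹ * ∑ i, f (x i) := by
  have hint (i : Fin k) : Integrable f (Measure.dirac (x i)) :=
    integrable_dirac' hf.stronglyMeasurable enorm_lt_top
  rw [empMeasure, integral_smul_measure, integral_finsetSum_measure fun i _ => hint i]
  simp [integral_dirac' f _ hf.stronglyMeasurable]

lemma isProbabilityMeasure_empMeasure {k : ℕ} (hk : 0 < k) (x : Fin k → Z) :
    IsProbabilityMeasure (empMeasure x) := by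
  constructor
  simpa [empMeasure] using
    ENNReal.inv_mul_cancel (by exact_mod_cast hk.ne') (ENNReal.natCast_ne_top k)

lemma abs_integral_sub_le_IPM {F : Set (Z → ℝ)} {ν : ℝ} (hF : ∀ f ∈ F, ∀ z, |f z| ≤ ν)
    {p q : Measure Z} [IsProbabilityMeasure p] [IsProbabilityMeasure q] {f : Z → ℝ}
    (hf : f ∈ F) :
    |∫ z, f z ∂p - ∫ z, f z ∂q| ≤ IPM F p q := by
  have habs (μ : Measure Z) [IsProbabilityMeasure μ] {g : Z → ℝ} (hg : g ∈ F) :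
      |∫ z, g z ∂μ| ≤ ν := by
    simpa using norm_integral_le_of_norm_le_const (μ := μ)
      (ae_of_all _ fun z => (Real.norm_eq_abs _).trans_le (hF g hg z))
  refine le_csSup ⟨2 * ν, ?_⟩ (Set.mem_image_of_mem _ hf)
  rintro _ ⟨g, hg, rfl⟩
  linarith [abs_sub (∫ z, g z ∂p) (∫ z, g z ∂q), habs p hg, habs q hg]

lemma abs_integral_sub_le_IPM_add {F : Set (Z → ℝ)} {ν : ℝ} (hF : ∀ f ∈ F, ∀ z, |f z| ≤ ν)
    {p q p' q' : Measure Z} [IsProbabilityMeasure p'] [IsProbabilityMeasure q']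
    {f : Z → ℝ} (hf : f ∈ F) :
    |∫ z, f z ∂p - ∫ z, f z ∂q| ≤
      IPM F p' q' + |∫ z, f z ∂p' - ∫ z, f z ∂p| + |∫ z, f z ∂q' - ∫ z, f z ∂q| := by
  set a := ∫ z, f z ∂p
  set b := ∫ z, f z ∂q
  set a' := ∫ z, f z ∂p'
  set b' := ∫ z, f z ∂q'
  linarith [abs_integral_sub_le_IPM hF (p := p') (q := q') hf, abs_sub_le a a' b,
    abs_sub_le a' b' b, abs_sub_comm a a', abs_sub_comm b' b]

lemma rademacher_nonneg (μ : Measure Z) (k : ℕ) (F : Set (Z → ℝ)) : 0 ≤ rademacher μ k F :=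
  integral_nonneg fun _ => Real.sSup_nonneg <| by
    rintro _ ⟨f, -, rfl⟩
    exact abs_nonneg _

section Hoeffding

open Real

variable {μ : Measure Z} [IsProbabilityMeasure μ] {f : Z → ℝ} {c : ℝ}

lemma measureReal_sum_sub_integral_ge_le {ι : Type*} [Fintype ι] (hf : Measurable f)
    (hfc : ∀ z, |f z| ≤ c) {ε : ℝ} (hε : 0 ≤ ε) :
    (Measure.pi fun _ : ι => μ).real {x | ε ≤ ∑ i, (f (x i) - ∫ z, f z ∂μ)} ≤
      exp (-ε ^ 2 / (2 * (Fintype.card ι * c ^ 2))) := by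
  have hsubG (i : ι) : HasSubgaussianMGF (fun x : ι → Z => f (x i) - ∫ z, f z ∂μ)
      ((‖c - -c‖₊ / 2) ^ 2) (Measure.pi fun _ : ι => μ) := by
    have h : HasSubgaussianMGF (fun z => f z - ∫ z, f z ∂μ) ((‖c - -c‖₊ / 2) ^ 2)
        ((Measure.pi fun _ : ι => μ).map (Function.eval i)) := by
      rw [(measurePreserving_eval (fun _ : ι => μ) i).map_eq]
      exact hasSubgaussianMGF_of_mem_Icc hf.aemeasurable (ae_of_all μ fun z => abs_le.1 (hfc z))
    exact h.of_map (measurePreserving_eval (fun _ : ι => μ) i).measurable.aemeasurable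
  have hparam : ((∑ _i : ι, (‖c - -c‖₊ / 2) ^ 2 : NNReal) : ℝ) = Fintype.card ι * c ^ 2 := by
    simp [sub_neg_eq_add, ← two_mul]
  rw [← hparam]
  exact HasSubgaussianMGF.measure_sum_ge_le_of_iIndepFun
    (iIndepFun_pi fun _ => (hf.sub_const _).aemeasurable) (fun i _ => hsubG i) hε

lemma measureReal_abs_sum_sub_integral_ge_le {ι : Type*} [Fintype ι] (hf : Measurable f)
    (hfc : ∀ z, |f z| ≤ c) {ε : ℝ} (hε : 0 ≤ ε) :
    (Measure.pi fun _ : ι => μ).real {x | ε ≤ |∑ i, (f (x i) - ∫ z, f z ∂μ)|} ≤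
      2 * exp (-ε ^ 2 / (2 * (Fintype.card ι * c ^ 2))) := by
  have hneg := measureReal_sum_sub_integral_ge_le (ι := ι) (μ := μ) hf.neg
    (fun z => (abs_neg (f z)).trans_le (hfc z)) hε
  have hunion : {x : ι → Z | ε ≤ |∑ i, (f (x i) - ∫ z, f z ∂μ)|} ⊆
      {x | ε ≤ ∑ i, (f (x i) - ∫ z, f z ∂μ)} ∪
        {x | ε ≤ ∑ i, ((-f) (x i) - ∫ z, (-f) z ∂μ)} := by
    intro x (hx : ε ≤ |_|)
    refine (le_abs.1 hx).imp id fun h => ?_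
    rw [← Finset.sum_neg_distrib] at h
    simpa only [Set.mem_ofPred_eq, Pi.neg_apply, integral_neg, neg_sub_neg, neg_sub] using h
  calc _ ≤ _ := measureReal_mono hunion
    _ ≤ _ := measureReal_union_le _ _
    _ ≤ _ := by linarith [measureReal_sum_sub_integral_ge_le (ι := ι) (μ := μ) hf hfc hε]

lemma measureReal_abs_integral_empMeasure_sub_ge_le {k : ℕ} (hk : 0 < k) (hf : Measurable f)
    (hfc : ∀ z, |f z| ≤ c) {t : ℝ} (ht : 0 ≤ t) :
    (Measure.pi fun _ : Fin k => μ).real {x | t ≤ |∫ z, f z ∂empMeasure x - ∫ z, f z ∂μ|} ≤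
      2 * exp (-(k * t ^ 2) / (2 * c ^ 2)) := by
  have hk' : (k : ℝ) ≠ 0 := by exact_mod_cast hk.ne'
  have hdev (x : Fin k → Z) : ∫ z, f z ∂empMeasure x - ∫ z, f z ∂μ =
      (∑ i, (f (x i) - ∫ z, f z ∂μ)) / k := by
    rw [integral_empMeasure x hf, Finset.sum_sub_distrib, Finset.sum_const, Finset.card_univ,
      Fintype.card_fin, nsmul_eq_mul]
    field_simp
  have hset : {x : Fin k → Z | t ≤ |∫ z, f z ∂empMeasure x - ∫ z, f z ∂μ|} =
      {x | k * t ≤ |∑ i, (f (x i) - ∫ z, f z ∂μ)|} := by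
    ext x
    rw [Set.mem_ofPred_eq, Set.mem_ofPred_eq, hdev, abs_div, Nat.abs_cast,
      le_div_iff₀' (by positivity)]
  have hexp : -(k * t) ^ 2 / (2 * (k * c ^ 2)) = -(k * t ^ 2) / (2 * c ^ 2) := by
    rw [show -(k * t) ^ 2 = k * -(k * t ^ 2) by ring,
      show 2 * (k * c ^ 2) = k * (2 * c ^ 2) by ring, mul_div_mul_left _ _ hk']
  have hoeffding := measureReal_abs_sum_sub_integral_ge_le (ι := Fin k) (μ := μ) hf hfc
    (ε := k * t) (by positivity)
  rwa [Fintype.card_fin, hexp, ← hset] at hoeffding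

lemma measure_abs_integral_empMeasure_sub_gt_le {k : ℕ} (hk : 0 < k) (hf : Measurable f)
    (hfc : ∀ z, |f z| ≤ c) {δ : ℝ} (hδ : 0 < δ) (hδ1 : δ ≤ 1) :
    (Measure.pi fun _ : Fin k => μ)
        {x | √(18 * c ^ 2 * log (4 / δ)) / √k < |∫ z, f z ∂empMeasure x - ∫ z, f z ∂μ|} ≤
      ENNReal.ofReal (δ / 4) := by
  -- at `c = 0` Hoeffding's exponent is a division by zero; but then `f = 0`
  rcases eq_or_ne c 0 with rfl | hc
  · obtain rfl : f = 0 := funext fun z => abs_nonpos_iff.1 (hfc z)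
    simp
  set L := log (4 / δ)
  have hL : 0 ≤ L := log_nonneg (by rw [le_div_iff₀ hδ]; linarith)
  have hexpL : exp (-L) = δ / 4 := by
    rw [exp_neg, exp_log (by positivity), inv_div]
  set t := √(18 * c ^ 2 * L) / √k
  have hkt : -(k * t ^ 2) / (2 * c ^ 2) = (9 : ℕ) * -L := by
    have hk' : (0 : ℝ) < k := by exact_mod_cast hk
    rw [div_pow, sq_sqrt (by positivity), sq_sqrt hk'.le]
    field_simp
    push_cast
    ring
  have htail : 2 * (δ / 4) ^ 9 ≤ δ / 4 := by
    have h8 : (δ / 4) ^ 8 ≤ δ / 4 := pow_le_of_le_one (by positivity) (by linarith) (by norm_num)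
    nlinarith
  calc (Measure.pi fun _ : Fin k => μ) {x | t < |∫ z, f z ∂empMeasure x - ∫ z, f z ∂μ|}
      ≤ (Measure.pi fun _ : Fin k => μ) {x | t ≤ |∫ z, f z ∂empMeasure x - ∫ z, f z ∂μ|} :=
        measure_mono fun x (hx : t < _) => hx.le
    _ = ENNReal.ofReal ((Measure.pi fun _ : Fin k => μ).real
          {x | t ≤ |∫ z, f z ∂empMeasure x - ∫ z, f z ∂μ|}) := (ofReal_measureReal).symm
    _ ≤ ENNReal.ofReal (2 * exp (-(k * t ^ 2) / (2 * c ^ 2))) := ENNReal.ofReal_le_ofReal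
        (measureReal_abs_integral_empMeasure_sub_ge_le hk hf hfc (by positivity))
    _ ≤ ENNReal.ofReal (δ / 4) := by
        rw [hkt, exp_nat_mul, hexpL]
        exact ENNReal.ofReal_le_ofReal htail

end Hoeffding

def empiricalMeansClose {k : ℕ} (μ : Measure Z) (G : Set (Z → ℝ)) (r : ℝ) : Set (Fin k → Z) :=
  {x | ∀ f ∈ G, |∫ z, f z ∂empMeasure x - ∫ z, f z ∂μ| ≤ r}

lemma measure_compl_empiricalMeansClose_pair_le {μ : Measure Z} [IsProbabilityMeasure μ]
    {k : ℕ} (hk : 0 < k) {f₀ f₁ : Z → ℝ} (hf₀ : Measurable f₀) (hf₁ : Measurable f₁) {c : ℝ}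
    (hf₀c : ∀ z, |f₀ z| ≤ c) (hf₁c : ∀ z, |f₁ z| ≤ c) {δ : ℝ} (hδ : 0 < δ) (hδ1 : δ ≤ 1) :
    (Measure.pi fun _ : Fin k => μ)
        (empiricalMeansClose μ {f₀, f₁} (√(18 * c ^ 2 * Real.log (4 / δ)) / √k))ᶜ ≤
      ENNReal.ofReal (δ / 2) := by
  have hsub : (empiricalMeansClose μ {f₀, f₁} (√(18 * c ^ 2 * Real.log (4 / δ)) / √k))ᶜ ⊆
      {x : Fin k → Z | √(18 * c ^ 2 * Real.log (4 / δ)) / √k <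
          |∫ z, f₀ z ∂empMeasure x - ∫ z, f₀ z ∂μ|} ∪
        {x | √(18 * c ^ 2 * Real.log (4 / δ)) / √k <
          |∫ z, f₁ z ∂empMeasure x - ∫ z, f₁ z ∂μ|} := by
    intro x hx
    simpa only [empiricalMeansClose, Set.mem_compl_iff, Set.mem_union, Set.mem_ofPred_eq,
      Set.forall_mem_insert, Set.mem_singleton_iff, forall_eq, not_and_or, not_le] using hx
  calc _ ≤ _ := measure_mono hsub
    _ ≤ _ := measure_union_le _ _
    _ ≤ ENNReal.ofReal (δ / 4) + ENNReal.ofReal (δ / 4) := add_le_add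
        (measure_abs_integral_empMeasure_sub_gt_le hk hf₀ hf₀c hδ hδ1)
        (measure_abs_integral_empMeasure_sub_gt_le hk hf₁ hf₁c hδ hδ1)
    _ = ENNReal.ofReal (δ / 2) := by
        rw [← ENNReal.ofReal_add (by positivity) (by positivity)]
        ring_nf

lemma measure_prod_compl_prod_le {W : Type*} [MeasurableSpace W] (μ : Measure Z) (ν : Measure W)
    [IsProbabilityMeasure μ] [IsProbabilityMeasure ν] (s : Set Z) (t : Set W) :
    μ.prod ν (s ×ˢ t)ᶜ ≤ μ sᶜ + ν tᶜ := by
  rw [Set.compl_prod_eq_union]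
  refine (measure_union_le _ _).trans_eq ?_
  rw [Measure.prod_prod, Measure.prod_prod, measure_univ, measure_univ, mul_one, one_mul]

lemma one_sub_le_measure_of_measure_compl_le {μ : Measure Z} [IsProbabilityMeasure μ]
    {s : Set Z} {ε : ENNReal} (h : μ sᶜ ≤ ε) : 1 - ε ≤ μ s :=
  tsub_le_iff_right.2 <| by
    simpa using (measure_univ_le_add_compl (μ := μ) s).trans (by gcongr)

lemma ofReal_one_sub_le_measure_empiricalMeansClose_prod {μ₀ μ₁ : Measure Z}
    [IsProbabilityMeasure μ₀] [IsProbabilityMeasure μ₁] {n m : ℕ} (hn : 0 < n) (hm : 0 < m)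
    {f₀ f₁ : Z → ℝ} (hf₀ : Measurable f₀) (hf₁ : Measurable f₁) {c : ℝ}
    (hf₀c : ∀ z, |f₀ z| ≤ c) (hf₁c : ∀ z, |f₁ z| ≤ c) {δ : ℝ} (hδ : 0 < δ) (hδ1 : δ ≤ 1) :
    ENNReal.ofReal (1 - δ) ≤
      ((Measure.pi fun _ : Fin n => μ₀).prod (Measure.pi fun _ : Fin m => μ₁))
      (empiricalMeansClose μ₀ {f₀, f₁} (√(18 * c ^ 2 * Real.log (4 / δ)) / √n) ×ˢ
        empiricalMeansClose μ₁ {f₀, f₁} (√(18 * c ^ 2 * Real.log (4 / δ)) / √m)) := by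
  rw [ENNReal.ofReal_sub 1 hδ.le, ENNReal.ofReal_one]
  refine one_sub_le_measure_of_measure_compl_le <| (measure_prod_compl_prod_le _ _ _ _).trans ?_
  calc _ ≤ ENNReal.ofReal (δ / 2) + ENNReal.ofReal (δ / 2) := add_le_add
        (measure_compl_empiricalMeansClose_pair_le hn hf₀ hf₁ hf₀c hf₁c hδ hδ1)
        (measure_compl_empiricalMeansClose_pair_le hm hf₀ hf₁ hf₀c hf₁c hδ hδ1)
    _ = ENNReal.ofReal δ := by rw [← ENNReal.ofReal_add (by positivity) (by positivity), add_halves]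

lemma integral_ofReal_smul_add_ofReal_smul {μ₁ μ₀ : Measure Z} {a b : ℝ} (ha : 0 ≤ a)
    (hb : 0 ≤ b) {g : Z → ℝ} (hg₁ : Integrable g μ₁) (hg₀ : Integrable g μ₀) :
    ∫ z, g z ∂(ENNReal.ofReal a • μ₁ + ENNReal.ofReal b • μ₀) =
      a * ∫ z, g z ∂μ₁ + b * ∫ z, g z ∂μ₀ := by
  rw [integral_add_measure (hg₁.smul_measure ENNReal.ofReal_ne_top)
    (hg₀.smul_measure ENNReal.ofReal_ne_top), integral_smul_measure, integral_smul_measure,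
    ENNReal.toReal_ofReal ha, ENNReal.toReal_ofReal hb, smul_eq_mul, smul_eq_mul]

lemma test_risk_sub_train_risk {μ₀ μ₁ : Measure Z} {π : ℝ} (hπ0 : 0 ≤ π) (hπ1 : π ≤ 1)
    {g₀ g₁ : Z → ℝ} (hg₀₀ : Integrable g₀ μ₀) (hg₀₁ : Integrable g₀ μ₁)
    (hg₁₀ : Integrable g₁ μ₀) (hg₁₁ : Integrable g₁ μ₁) :
    π * (∫ z, g₁ z ∂(ENNReal.ofReal π • μ₁ + ENNReal.ofReal (1 - π) • μ₀)) +
        (1 - π) * (∫ z, g₀ z ∂(ENNReal.ofReal π • μ₁ + ENNReal.ofReal (1 - π) • μ₀)) -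
        (π * (∫ z, g₁ z ∂μ₁) + (1 - π) * (∫ z, g₀ z ∂μ₀)) =
      π * (1 - π) * ((∫ z, g₁ z ∂μ₀ - ∫ z, g₁ z ∂μ₁) - (∫ z, g₀ z ∂μ₀ - ∫ z, g₀ z ∂μ₁)) := by
  rw [integral_ofReal_smul_add_ofReal_smul hπ0 (by linarith) hg₁₁ hg₁₀,
    integral_ofReal_smul_add_ofReal_smul hπ0 (by linarith) hg₀₁ hg₀₀]
  ring

lemma test_risk_le_train_risk_add_of_deviation_le {μ₀ μ₁ p₀ p₁ : Measure Z}
    [IsProbabilityMeasure μ₀] [IsProbabilityMeasure μ₁] [IsProbabilityMeasure p₀]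
    [IsProbabilityMeasure p₁] {π : ℝ} (hπ0 : 0 ≤ π) (hπ1 : π ≤ 1) {B : ℝ} (hB : 0 ≤ B)
    {F : Set (Z → ℝ)} (hFmeas : ∀ f ∈ F, Measurable f) {ν : ℝ} (hF : ∀ f ∈ F, ∀ z, |f z| ≤ ν)
    {f₀ f₁ : Z → ℝ} (hf₀ : f₀ ∈ F) (hf₁ : f₁ ∈ F) {r₀ r₁ : ℝ}
    (h₀ : ∀ f ∈ ({f₀, f₁} : Set (Z → ℝ)), |∫ z, f z ∂p₀ - ∫ z, f z ∂μ₀| ≤ r₀)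
    (h₁ : ∀ f ∈ ({f₀, f₁} : Set (Z → ℝ)), |∫ z, f z ∂p₁ - ∫ z, f z ∂μ₁| ≤ r₁) :
    π * (∫ z, B * f₁ z ∂(ENNReal.ofReal π • μ₁ + ENNReal.ofReal (1 - π) • μ₀)) +
        (1 - π) * (∫ z, B * f₀ z ∂(ENNReal.ofReal π • μ₁ + ENNReal.ofReal (1 - π) • μ₀)) ≤
      (π * (∫ z, B * f₁ z ∂μ₁) + (1 - π) * (∫ z, B * f₀ z ∂μ₀)) +
        2 * π * (1 - π) * B * (IPM F p₀ p₁ + r₀ + r₁) := by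
  have hint {μ : Measure Z} [IsFiniteMeasure μ] {f : Z → ℝ} (hf : f ∈ F) : Integrable f μ :=
    Integrable.of_bound (hFmeas f hf).aestronglyMeasurable ν (ae_of_all _ (hF f hf))
  have hgap {f : Z → ℝ} (hf : f ∈ ({f₀, f₁} : Set (Z → ℝ))) :
      |∫ z, f z ∂μ₀ - ∫ z, f z ∂μ₁| ≤ IPM F p₀ p₁ + r₀ + r₁ := by
    have hfF : f ∈ F := by rcases hf with rfl | rfl <;> assumption
    linarith [abs_integral_sub_le_IPM_add hF hfF (p := μ₀) (q := μ₁) (p' := p₀) (q' := p₁),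
      h₀ f hf, h₁ f hf]
  have hgap₀ := abs_le.1 (hgap (Set.mem_insert f₀ {f₁}))
  have hgap₁ := abs_le.1 (hgap (Set.mem_insert_of_mem f₀ rfl))
  have hkey : (∫ z, f₁ z ∂μ₀ - ∫ z, f₁ z ∂μ₁) - (∫ z, f₀ z ∂μ₀ - ∫ z, f₀ z ∂μ₁) ≤
      2 * (IPM F p₀ p₁ + r₀ + r₁) := by linarith
  have hweight : 0 ≤ π * (1 - π) * B := by have := sub_nonneg.2 hπ1; positivity
  have hrisk := test_risk_sub_train_risk (μ₀ := μ₀) (μ₁ := μ₁) hπ0 hπ1 (hint hf₀) (hint hf₀)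
    (hint hf₁) (hint hf₁)
  simp only [integral_const_mul]
  linear_combination B * hrisk + mul_le_mul_of_nonneg_left hkey hweight

end

theorem test_risk_le_train_risk_add_empirical_ipm_general
    {Z : Type*} [MeasurableSpace Z] (μ0 μ1 : Measure Z)
    [IsProbabilityMeasure μ0] [IsProbabilityMeasure μ1]
    (π : ℝ) (hπ0 : 0 ≤ π) (hπ1 : π ≤ 1)
    (B : ℝ) (hB : 0 < B)
    (ℓ0 ℓ1 : Z → ℝ)
    (F : Set (Z → ℝ))
    (hFmeas : ∀ f ∈ F, Measurable f)
    (ν : ℝ) (hν : ∀ f ∈ F, ∀ z, |f z| ≤ ν)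
    (hmem0 : (fun z => B⁻¹ * ℓ0 z) ∈ F) (hmem1 : (fun z => B⁻¹ * ℓ1 z) ∈ F)
    (m n : ℕ) (hm : 0 < m) (hn : 0 < n)
    (δ : ℝ) (hδ : 0 < δ) (hδ1 : δ < 1) :
    ENNReal.ofReal (1 - δ) ≤
      ((Measure.pi fun _ : Fin n => μ0).prod (Measure.pi fun _ : Fin m => μ1))
        {ω : (Fin n → Z) × (Fin m → Z) |
          π * (∫ z, ℓ1 z ∂(ENNReal.ofReal π • μ1 + ENNReal.ofReal (1 - π) • μ0)) +
            (1 - π) * (∫ z, ℓ0 z ∂(ENNReal.ofReal π • μ1 + ENNReal.ofReal (1 - π) • μ0)) ≤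
          (π * (∫ z, ℓ1 z ∂μ1) + (1 - π) * (∫ z, ℓ0 z ∂μ0)) +
            2 * π * (1 - π) * B *
              (IPM F (empMeasure ω.1) (empMeasure ω.2) +
                2 * rademacher μ1 m F + 2 * rademacher μ0 n F +
                Real.sqrt (18 * ν ^ 2 * Real.log (4 / δ)) *
                  (1 / Real.sqrt m + 1 / Real.sqrt n))} := by
  obtain ⟨f₀, hf₀, rfl⟩ : ∃ f ∈ F, ℓ0 = fun z => B * f z := ⟨_, hmem0, by ext; field_simp⟩
  obtain ⟨f₁, hf₁, rfl⟩ : ∃ f ∈ F, ℓ1 = fun z => B * f z := ⟨_, hmem1, by ext; field_simp⟩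
  refine (ofReal_one_sub_le_measure_empiricalMeansClose_prod hn hm (hFmeas _ hf₀) (hFmeas _ hf₁)
    (hν _ hf₀) (hν _ hf₁) hδ hδ1.le).trans (measure_mono ?_)
  rintro ω ⟨h0, h1⟩
  have := isProbabilityMeasure_empMeasure hn ω.1
  have := isProbabilityMeasure_empMeasure hm ω.2
  have hweight : 0 ≤ 2 * π * (1 - π) * B := by have := sub_nonneg.2 hπ1; positivity
  refine (test_risk_le_train_risk_add_of_deviation_le hπ0 hπ1 hB.le hFmeas hν hf₀ hf₁ h0 h1).trans
    (add_le_add le_rfl (mul_le_mul_of_nonneg_left ?_ hweight))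
  rw [mul_add, mul_one_div, mul_one_div]
  linarith [rademacher_nonneg μ1 m F, rademacher_nonneg μ0 n F]

/-- Proposition 2: empirical generalization bound for the test risk.
The samples are `n` i.i.d. draws from `μ0` and `m` i.i.d. draws from `μ1`,
all mutually independent. -/
theorem test_risk_le_train_risk_add_empirical_ipm
    {Z : Type*} [MeasurableSpace Z] (μ0 μ1 : Measure Z)
    [IsProbabilityMeasure μ0] [IsProbabilityMeasure μ1]
    (π : ℝ) (hπ0 : 0 ≤ π) (hπ1 : π ≤ 1)
    (B : ℝ) (hB : 0 < B)
    (ℓ0 ℓ1 : Z → ℝ) (hℓ0meas : Measurable ℓ0) (hℓ1meas : Measurable ℓ1)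
    (hℓ0bdd : ∃ C, ∀ z, |ℓ0 z| ≤ C) (hℓ1bdd : ∃ C, ∀ z, |ℓ1 z| ≤ C)
    (F : Set (Z → ℝ)) (hFcount : F.Countable)
    (hFmeas : ∀ f ∈ F, Measurable f)
    (ν : ℝ) (hν : ∀ f ∈ F, ∀ z, |f z| ≤ ν)
    (hmem0 : (fun z => B⁻¹ * ℓ0 z) ∈ F) (hmem1 : (fun z => B⁻¹ * ℓ1 z) ∈ F)
    (m n : ℕ) (hm : 0 < m) (hn : 0 < n)
    (δ : ℝ) (hδ : 0 < δ) (hδ1 : δ < 1) :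
    ENNReal.ofReal (1 - δ) ≤
      ((Measure.pi fun _ : Fin n => μ0).prod (Measure.pi fun _ : Fin m => μ1))
        {ω : (Fin n → Z) × (Fin m → Z) |
          π * (∫ z, ℓ1 z ∂(ENNReal.ofReal π • μ1 + ENNReal.ofReal (1 - π) • μ0)) +
            (1 - π) * (∫ z, ℓ0 z ∂(ENNReal.ofReal π • μ1 + ENNReal.ofReal (1 - π) • μ0)) ≤
          (π * (∫ z, ℓ1 z ∂μ1) + (1 - π) * (∫ z, ℓ0 z ∂μ0)) +
            2 * π * (1 - π) * B *
              (IPM F (empMeasure ω.1) (empMeasure ω.2) +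
                2 * rademacher μ1 m F + 2 * rademacher μ0 n F +
                Real.sqrt (18 * ν ^ 2 * Real.log (4 / δ)) *
                  (1 / Real.sqrt m + 1 / Real.sqrt n))} :=
  test_risk_le_train_risk_add_empirical_ipm_general μ0 μ1 π hπ0 hπ1 B hB ℓ0 ℓ1 F hFmeas ν hν hmem0
    hmem1 m n hm hn δ hδ hδ1
end

section
/- Let X be a measurable space, μ a probability measure on X, and F a countable family of measurable functions f : X → ℝ with sup_{f ∈ F} sup_{x ∈ X} |f(x)| ≤ ν < ∞. Let X_1, …, X_m be i.i.d. with law μ. Then E[ sup_{f ∈ F} |(1/m) Σ_{i=1}^m f(X_i) − ∫ f dμ| ] ≤ 2 R_m^μ(F). -/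
open MeasureTheory

section Aux

lemma measurePreserving_eval_pi {ι : Type*} [Fintype ι] {α : ι → Type*}
    [∀ i, MeasurableSpace (α i)] (μ : ∀ i, Measure (α i)) [∀ i, IsProbabilityMeasure (μ i)]
    (i : ι) : MeasurePreserving (Function.eval i) (Measure.pi μ) (μ i) := by
  classical
  refine ⟨measurable_pi_apply i, ?_⟩
  ext s hs
  rw [Measure.map_apply (measurable_pi_apply i) hs]
  have h1 : Function.eval i ⁻¹' s
      = Set.pi Set.univ (Function.update (fun j => (Set.univ : Set (α j))) i s) := by
    ext x
    simp only [Set.mem_preimage, Set.mem_univ_pi]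
    constructor
    · intro hx j
      rcases eq_or_ne j i with rfl | hj
      · simpa using hx
      · simp [Function.update_of_ne hj]
    · intro hx
      have := hx i
      simpa using this
  rw [h1, Measure.pi_pi]
  rw [Finset.prod_eq_single i (fun j _ hj => by simp [Function.update_of_ne hj])
    (fun h => absurd (Finset.mem_univ i) h)]
  simp

lemma integral_eval_pi {X : Type*} [MeasurableSpace X] {μ : Measure X}
    [IsProbabilityMeasure μ] {m : ℕ} (i : Fin m) {f : X → ℝ} (hf : Measurable f) :
    ∫ y : Fin m → X, f (y i) ∂(Measure.pi fun _ : Fin m => μ) = ∫ z, f z ∂μ := by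
  have h := (measurePreserving_eval_pi (fun _ : Fin m => μ) i).map_eq
  calc ∫ y : Fin m → X, f (y i) ∂(Measure.pi fun _ : Fin m => μ)
      = ∫ z, f z ∂((Measure.pi fun _ : Fin m => μ).map (Function.eval i)) :=
        (integral_map (measurable_pi_apply i).aemeasurable hf.aestronglyMeasurable).symm
    _ = ∫ z, f z ∂μ := by rw [h]

lemma integrable_of_bounded_meas {α : Type*} [MeasurableSpace α] {ρ : Measure α}
    [IsFiniteMeasure ρ] {h : α → ℝ} (hmeas : Measurable h) {C : ℝ} (hb : ∀ a, |h a| ≤ C) :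
    Integrable h ρ :=
  (integrable_const C).mono' hmeas.aestronglyMeasurable
    (Filter.Eventually.of_forall fun a => by simpa [Real.norm_eq_abs] using hb a)

lemma abs_sub_le_abs_add_abs (a b : ℝ) : |a - b| ≤ |a| + |b| := by
  rw [sub_eq_add_neg]
  exact (abs_add_le _ _).trans (by rw [abs_neg])

end Aux

lemma abs_inv_mul_sum_le {m : ℕ} (g : Fin m → ℝ) {B : ℝ} (hB : 0 ≤ B)
    (hg : ∀ i, |g i| ≤ B) : |(m : ℝ)⁻¹ * ∑ i, g i| ≤ B := by
  have h1 : |∑ i, g i| ≤ m * B := by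
    refine (Finset.abs_sum_le_sum_abs g Finset.univ).trans ?_
    calc ∑ i, |g i| ≤ ∑ _i : Fin m, B := Finset.sum_le_sum fun i _ => hg i
      _ = m * B := by simp [Finset.sum_const, Finset.card_univ, nsmul_eq_mul]
  rcases Nat.eq_zero_or_pos m with rfl | hm
  · simpa using hB
  rw [abs_mul, abs_inv, Nat.abs_cast]
  calc (m : ℝ)⁻¹ * |∑ i, g i| ≤ (m : ℝ)⁻¹ * (m * B) := by
        exact mul_le_mul_of_nonneg_left h1 (by positivity)
    _ = B := by
        field_simp

lemma sup_family {X α : Type*} [MeasurableSpace X] [MeasurableSpace α]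
    {F : Set (X → ℝ)} (hFcount : F.Countable)
    (G : (X → ℝ) → α → ℝ) (hGmeas : ∀ f ∈ F, Measurable (G f))
    {C : ℝ} (hC : 0 ≤ C) (hGb : ∀ f ∈ F, ∀ a, |G f a| ≤ C) :
    Measurable (fun a => sSup ((fun f => |G f a|) '' F)) ∧
    (∀ a, 0 ≤ sSup ((fun f => |G f a|) '' F)) ∧
    (∀ a, sSup ((fun f => |G f a|) '' F) ≤ C) ∧
    (∀ f ∈ F, ∀ a, |G f a| ≤ sSup ((fun f => |G f a|) '' F)) := by
  refine ⟨?_, ?_, ?_, ?_⟩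
  · exact Measurable.sSup hFcount (fun f hf => (hGmeas f hf).abs)
  · intro a
    exact Real.sSup_nonneg (by rintro y ⟨f, hf, rfl⟩; exact abs_nonneg _)
  · intro a
    exact Real.sSup_le (by rintro y ⟨f, hf, rfl⟩; exact hGb f hf a) hC
  · intro f hf a
    refine le_csSup ⟨C, ?_⟩ (Set.mem_image_of_mem _ hf)
    rintro y ⟨f', hf', rfl⟩
    exact hGb f' hf' a

lemma abs_le_of_nonneg_le {a C : ℝ} (h0 : 0 ≤ a) (h : a ≤ C) : |a| ≤ C := by
  rw [abs_of_nonneg h0]; exact h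

lemma stepA {X : Type*} [MeasurableSpace X] (μ : Measure X) [IsProbabilityMeasure μ]
    {F : Set (X → ℝ)} (hFcount : F.Countable) (hFmeas : ∀ f ∈ F, Measurable f)
    {ν : ℝ} (hν0 : 0 ≤ ν) (hν : ∀ f ∈ F, ∀ x, |f x| ≤ ν) {m : ℕ} (hm : 0 < m) :
    (∫ x : Fin m → X,
        sSup ((fun f => |((m : ℝ)⁻¹ * ∑ i : Fin m, f (x i)) - ∫ z, f z ∂μ|) '' F)
        ∂(Measure.pi fun _ => μ))
      ≤ ∫ p : (Fin m → X) × (Fin m → X),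
          sSup ((fun f => |(m : ℝ)⁻¹ * ∑ i : Fin m, (f (p.1 i) - f (p.2 i))|) '' F)
          ∂((Measure.pi fun _ : Fin m => μ).prod (Measure.pi fun _ : Fin m => μ)) := by
  classical
  set P : Measure (Fin m → X) := Measure.pi fun _ : Fin m => μ with hPdef
  haveI : IsProbabilityMeasure P := by rw [hPdef]; infer_instance
  have hm0 : (m : ℝ) ≠ 0 := Nat.cast_ne_zero.mpr hm.ne'
  have hint_f : ∀ f ∈ F, ∀ i : Fin m, Integrable (fun y : Fin m → X => f (y i)) P := by
    intro f hf i
    exact integrable_of_bounded_meas ((hFmeas f hf).comp (measurable_pi_apply i))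
      (fun y => hν f hf _)
  have hintf : ∀ f ∈ F, |∫ z, f z ∂μ| ≤ ν := by
    intro f hf
    have h := norm_integral_le_of_norm_le_const (μ := μ) (f := f) (C := ν)
      (Filter.Eventually.of_forall fun z => by simpa [Real.norm_eq_abs] using hν f hf z)
    simpa [Real.norm_eq_abs, measure_univ] using h
  -- facts about the ghost-sample sup
  obtain ⟨hJmeas, hJnn, hJle, hJmem⟩ :=
    sup_family (α := (Fin m → X) × (Fin m → X)) hFcount
      (fun f p => (m : ℝ)⁻¹ * ∑ i : Fin m, (f (p.1 i) - f (p.2 i)))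
      (fun f hf => measurable_const.mul (Finset.measurable_sum _ fun i _ =>
        ((hFmeas f hf).comp ((measurable_pi_apply i).comp measurable_fst)).sub
        ((hFmeas f hf).comp ((measurable_pi_apply i).comp measurable_snd))))
      (C := 2 * ν) (by linarith)
      (fun f hf p => abs_inv_mul_sum_le _ (by linarith) (fun i =>
        (abs_sub_le_abs_add_abs _ _).trans (by
          have := hν f hf (p.1 i); have := hν f hf (p.2 i); linarith)))
  set SJ : (Fin m → X) × (Fin m → X) → ℝ := fun p =>
    sSup ((fun f => |(m : ℝ)⁻¹ * ∑ i : Fin m, (f (p.1 i) - f (p.2 i))|) '' F) with hSJdef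
  have hSJint : Integrable SJ (P.prod P) :=
    integrable_of_bounded_meas hJmeas (fun p => abs_le_of_nonneg_le (hJnn p) (hJle p))
  -- facts about the LHS sup
  obtain ⟨h0meas, h0nn, h0le, _⟩ :=
    sup_family (α := Fin m → X) hFcount
      (fun f x => ((m : ℝ)⁻¹ * ∑ i : Fin m, f (x i)) - ∫ z, f z ∂μ)
      (fun f hf => (measurable_const.mul (Finset.measurable_sum _ fun i _ =>
        (hFmeas f hf).comp (measurable_pi_apply i))).sub measurable_const)
      (C := 2 * ν) (by linarith)
      (fun f hf x => (abs_sub_le_abs_add_abs _ _).trans (by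
        have h1 : |(m : ℝ)⁻¹ * ∑ i : Fin m, f (x i)| ≤ ν :=
          abs_inv_mul_sum_le _ hν0 (fun i => hν f hf _)
        have h2 := hintf f hf
        linarith))
  have hS0int : Integrable (fun x : Fin m → X =>
      sSup ((fun f => |((m : ℝ)⁻¹ * ∑ i : Fin m, f (x i)) - ∫ z, f z ∂μ|) '' F)) P :=
    integrable_of_bounded_meas h0meas (fun x => abs_le_of_nonneg_le (h0nn x) (h0le x))
  -- pointwise ghost sample bound
  have hptwise : ∀ x : Fin m → X,
      sSup ((fun f => |((m : ℝ)⁻¹ * ∑ i : Fin m, f (x i)) - ∫ z, f z ∂μ|) '' F)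
        ≤ ∫ y, SJ (x, y) ∂P := by
    intro x
    refine Real.sSup_le ?_ (integral_nonneg fun y => hJnn (x, y))
    rintro w ⟨f, hf, rfl⟩
    have hfm := hFmeas f hf
    have hrep : ((m : ℝ)⁻¹ * ∑ i : Fin m, f (x i)) - ∫ z, f z ∂μ
        = ∫ y, (m : ℝ)⁻¹ * ∑ i : Fin m, (f (x i) - f (y i)) ∂P := by
      rw [integral_const_mul,
        integral_finset_sum (μ := P) Finset.univ
          (f := fun (i : Fin m) (y : Fin m → X) => f (x i) - f (y i))
          (fun i _ => (integrable_const _).sub (hint_f f hf i))]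
      have hco : ∀ i : Fin m, ∫ y, (f (x i) - f (y i)) ∂P = f (x i) - ∫ z, f z ∂μ := by
        intro i
        rw [integral_sub (integrable_const _) (hint_f f hf i), integral_const,
          integral_eval_pi i hfm]
        simp [measure_univ]
      simp_rw [hco]
      rw [Finset.sum_sub_distrib, Finset.sum_const, Finset.card_univ, Fintype.card_fin,
        mul_sub]
      congr 1
      rw [nsmul_eq_mul, ← mul_assoc, inv_mul_cancel₀ hm0, one_mul]
    have habsint : Integrable
        (fun y : Fin m → X => |(m : ℝ)⁻¹ * ∑ i : Fin m, (f (x i) - f (y i))|) P := by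
      refine integrable_of_bounded_meas
        ((measurable_const.mul (Finset.measurable_sum _ fun i _ =>
          measurable_const.sub (hfm.comp (measurable_pi_apply i)))).abs)
        (C := 2 * ν) (fun y => ?_)
      rw [abs_abs]
      refine abs_inv_mul_sum_le _ (by linarith) (fun i =>
        (abs_sub_le_abs_add_abs _ _).trans ?_)
      have := hν f hf (x i); have := hν f hf (y i); linarith
    have hSJxint : Integrable (fun y => SJ (x, y)) P :=
      integrable_of_bounded_meas (hJmeas.comp measurable_prodMk_left)
        (fun y => abs_le_of_nonneg_le (hJnn (x, y)) (hJle (x, y)))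
    calc |((m : ℝ)⁻¹ * ∑ i : Fin m, f (x i)) - ∫ z, f z ∂μ|
        = |∫ y, (m : ℝ)⁻¹ * ∑ i : Fin m, (f (x i) - f (y i)) ∂P| := by rw [hrep]
      _ ≤ ∫ y, |(m : ℝ)⁻¹ * ∑ i : Fin m, (f (x i) - f (y i))| ∂P := by
          simpa only [Real.norm_eq_abs] using
            norm_integral_le_integral_norm (μ := P)
              (fun y : Fin m → X => (m : ℝ)⁻¹ * ∑ i : Fin m, (f (x i) - f (y i)))
      _ ≤ ∫ y, SJ (x, y) ∂P :=
          integral_mono habsint hSJxint (fun y => hJmem f hf (x, y))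
  calc (∫ x : Fin m → X,
        sSup ((fun f => |((m : ℝ)⁻¹ * ∑ i : Fin m, f (x i)) - ∫ z, f z ∂μ|) '' F) ∂P)
      ≤ ∫ x, ∫ y, SJ (x, y) ∂P ∂P :=
        integral_mono hS0int hSJint.integral_prod_left hptwise
    _ = ∫ p, SJ p ∂(P.prod P) := (integral_prod _ hSJint).symm

lemma stepB {X : Type*} [MeasurableSpace X] (μ : Measure X) [IsProbabilityMeasure μ]
    (F : Set (X → ℝ)) {m : ℕ} (ε : Fin m → Bool) :
    ∫ p : (Fin m → X) × (Fin m → X),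
      sSup ((fun f => |(m : ℝ)⁻¹ * ∑ i : Fin m, (f (p.1 i) - f (p.2 i))|) '' F)
      ∂((Measure.pi fun _ : Fin m => μ).prod (Measure.pi fun _ : Fin m => μ))
    = ∫ p : (Fin m → X) × (Fin m → X),
      sSup ((fun f => |(m : ℝ)⁻¹ * ∑ i : Fin m,
        (if ε i then (1 : ℝ) else -1) * (f (p.1 i) - f (p.2 i))|) '' F)
      ∂((Measure.pi fun _ : Fin m => μ).prod (Measure.pi fun _ : Fin m => μ)) := by
  classical
  set P : Measure (Fin m → X) := Measure.pi fun _ : Fin m => μ with hPdef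
  haveI : IsProbabilityMeasure P := by rw [hPdef]; infer_instance
  set SJ : (Fin m → X) × (Fin m → X) → ℝ := fun p =>
    sSup ((fun f => |(m : ℝ)⁻¹ * ∑ i : Fin m, (f (p.1 i) - f (p.2 i))|) '' F) with hSJdef
  let e1 : (Fin m → X × X) ≃ᵐ (Fin m → X) × (Fin m → X) :=
    MeasurableEquiv.arrowProdEquivProdArrow X X (Fin m)
  let e2 : (Fin m → X × X) ≃ᵐ (Fin m → X × X) :=
    MeasurableEquiv.piCongrRight (fun i =>
      if ε i then MeasurableEquiv.refl (X × X)
      else (MeasurableEquiv.prodComm : X × X ≃ᵐ X × X))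
  have hmp1 : MeasurePreserving e1 (Measure.pi fun _ : Fin m => μ.prod μ) (P.prod P) :=
    measurePreserving_arrowProdEquivProdArrow X X (Fin m) (fun _ => μ) (fun _ => μ)
  have hcoord : ∀ i : Fin m, MeasurePreserving
      (⇑(if ε i then MeasurableEquiv.refl (X × X)
        else (MeasurableEquiv.prodComm : X × X ≃ᵐ X × X)))
      (μ.prod μ) (μ.prod μ) := by
    intro i
    by_cases h : ε i
    · simp only [h, if_true]
      exact ⟨(MeasurableEquiv.refl (X × X)).measurable,
        by rw [show ⇑(MeasurableEquiv.refl (X × X)) = id from rfl]; exact Measure.map_id⟩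
    · simp only [h, if_false]
      exact Measure.measurePreserving_swap
  have hmp2 : MeasurePreserving (⇑e2)
      (Measure.pi fun _ : Fin m => μ.prod μ) (Measure.pi fun _ : Fin m => μ.prod μ) :=
    measurePreserving_pi _ _ hcoord
  set T : (Fin m → X) × (Fin m → X) ≃ᵐ (Fin m → X) × (Fin m → X) :=
    (e1.symm.trans e2).trans e1 with hTdef
  have hmpT : MeasurePreserving ⇑T (P.prod P) (P.prod P) :=
    hmp1.comp (hmp2.comp (hmp1.symm e1))
  have hTapp : ∀ p : (Fin m → X) × (Fin m → X),
      T p = (fun i => if ε i then p.1 i else p.2 i,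
             fun i => if ε i then p.2 i else p.1 i) := by
    intro p
    have he2 : e2 (fun i => (p.1 i, p.2 i))
        = fun i => if ε i then (p.1 i, p.2 i) else (p.2 i, p.1 i) := by
      funext i
      show (if ε i = true then MeasurableEquiv.refl (X × X)
        else (MeasurableEquiv.prodComm : X × X ≃ᵐ X × X)) (p.1 i, p.2 i) = _
      by_cases h : ε i
      · simp only [h, if_true]
        rfl
      · simp only [h, if_false]
        rfl
    have hT1 : T p = e1 (e2 (fun i => (p.1 i, p.2 i))) := rfl
    rw [hT1, he2]
    refine Prod.ext ?_ ?_ <;> funext i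
    · show (if ε i = true then (p.1 i, p.2 i) else (p.2 i, p.1 i)).1 = _
      by_cases h : ε i <;> simp [h]
    · show (if ε i = true then (p.1 i, p.2 i) else (p.2 i, p.1 i)).2 = _
      by_cases h : ε i <;> simp [h]
  calc ∫ p, SJ p ∂(P.prod P)
      = ∫ p, SJ (T p) ∂(P.prod P) :=
        (hmpT.integral_comp T.measurableEmbedding SJ).symm
    _ = ∫ p : (Fin m → X) × (Fin m → X),
          sSup ((fun f => |(m : ℝ)⁻¹ * ∑ i : Fin m,
            (if ε i then (1 : ℝ) else -1) * (f (p.1 i) - f (p.2 i))|) '' F)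
          ∂(P.prod P) := by
        refine integral_congr_ae (Filter.Eventually.of_forall fun p => ?_)
        rw [hSJdef]
        simp only [hTapp p]
        congr 1
        have hfe : (fun f : X → ℝ => |(m : ℝ)⁻¹ * ∑ i : Fin m,
            (f (if ε i then p.1 i else p.2 i) - f (if ε i then p.2 i else p.1 i))|)
            = (fun f : X → ℝ => |(m : ℝ)⁻¹ * ∑ i : Fin m,
            (if ε i then (1 : ℝ) else -1) * (f (p.1 i) - f (p.2 i))|) := by
          funext f
          congr 1
          congr 1
          refine Finset.sum_congr rfl fun i _ => ?_
          by_cases h : ε i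
          · simp [h]
          · simp [h]
        rw [hfe]

lemma stepC {X : Type*} [MeasurableSpace X] (μ : Measure X) [IsProbabilityMeasure μ]
    {F : Set (X → ℝ)} (hFcount : F.Countable) (hFmeas : ∀ f ∈ F, Measurable f)
    {ν : ℝ} (hν0 : 0 ≤ ν) (hν : ∀ f ∈ F, ∀ x, |f x| ≤ ν) {m : ℕ} (ε : Fin m → Bool) :
    ∫ p : (Fin m → X) × (Fin m → X),
      sSup ((fun f => |(m : ℝ)⁻¹ * ∑ i : Fin m,
        (if ε i then (1 : ℝ) else -1) * (f (p.1 i) - f (p.2 i))|) '' F)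
      ∂((Measure.pi fun _ : Fin m => μ).prod (Measure.pi fun _ : Fin m => μ))
    ≤ 2 * ∫ x : Fin m → X,
        sSup ((fun f => |(m : ℝ)⁻¹ * ∑ i : Fin m,
          (if ε i then (1 : ℝ) else -1) * f (x i)|) '' F)
        ∂(Measure.pi fun _ : Fin m => μ) := by
  classical
  set P : Measure (Fin m → X) := Measure.pi fun _ : Fin m => μ with hPdef
  haveI : IsProbabilityMeasure P := by rw [hPdef]; infer_instance
  have hone : ∀ i : Fin m, |if ε i then (1 : ℝ) else -1| = 1 := by
    intro i; by_cases h : ε i <;> simp [h]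
  obtain ⟨hJmeas, hJnn, hJle, _⟩ :=
    sup_family (α := (Fin m → X) × (Fin m → X)) hFcount
      (fun f p => (m : ℝ)⁻¹ * ∑ i : Fin m,
        (if ε i then (1 : ℝ) else -1) * (f (p.1 i) - f (p.2 i)))
      (fun f hf => measurable_const.mul (Finset.measurable_sum _ fun i _ =>
        measurable_const.mul
        (((hFmeas f hf).comp ((measurable_pi_apply i).comp measurable_fst)).sub
        ((hFmeas f hf).comp ((measurable_pi_apply i).comp measurable_snd)))))
      (C := 2 * ν) (by linarith)
      (fun f hf p => abs_inv_mul_sum_le _ (by linarith) (fun i => by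
        rw [abs_mul, hone i, one_mul]
        refine (abs_sub_le_abs_add_abs _ _).trans ?_
        have := hν f hf (p.1 i); have := hν f hf (p.2 i); linarith))
  obtain ⟨hRmeas, hRnn, hRle, hRmem⟩ :=
    sup_family (α := Fin m → X) hFcount
      (fun f x => (m : ℝ)⁻¹ * ∑ i : Fin m, (if ε i then (1 : ℝ) else -1) * f (x i))
      (fun f hf => measurable_const.mul (Finset.measurable_sum _ fun i _ =>
        measurable_const.mul ((hFmeas f hf).comp (measurable_pi_apply i))))
      (C := ν) hν0
      (fun f hf x => abs_inv_mul_sum_le _ hν0 (fun i => by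
        rw [abs_mul, hone i, one_mul]; exact hν f hf _))
  set SR : (Fin m → X) → ℝ := fun x =>
    sSup ((fun f => |(m : ℝ)⁻¹ * ∑ i : Fin m,
      (if ε i then (1 : ℝ) else -1) * f (x i)|) '' F) with hSRdef
  have hJint : Integrable (fun p : (Fin m → X) × (Fin m → X) =>
      sSup ((fun f => |(m : ℝ)⁻¹ * ∑ i : Fin m,
        (if ε i then (1 : ℝ) else -1) * (f (p.1 i) - f (p.2 i))|) '' F)) (P.prod P) :=
    integrable_of_bounded_meas hJmeas (fun p => abs_le_of_nonneg_le (hJnn p) (hJle p))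
  have h1 : Integrable (fun p : (Fin m → X) × (Fin m → X) => SR p.1) (P.prod P) :=
    integrable_of_bounded_meas (hRmeas.comp measurable_fst)
      (fun p => abs_le_of_nonneg_le (hRnn p.1) (hRle p.1))
  have h2 : Integrable (fun p : (Fin m → X) × (Fin m → X) => SR p.2) (P.prod P) :=
    integrable_of_bounded_meas (hRmeas.comp measurable_snd)
      (fun p => abs_le_of_nonneg_le (hRnn p.2) (hRle p.2))
  have hpt : ∀ p : (Fin m → X) × (Fin m → X),
      sSup ((fun f => |(m : ℝ)⁻¹ * ∑ i : Fin m,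
        (if ε i then (1 : ℝ) else -1) * (f (p.1 i) - f (p.2 i))|) '' F)
      ≤ SR p.1 + SR p.2 := by
    intro p
    refine Real.sSup_le ?_ (add_nonneg (hRnn p.1) (hRnn p.2))
    rintro w ⟨f, hf, rfl⟩
    have hsplit : (m : ℝ)⁻¹ * ∑ i : Fin m,
        (if ε i then (1 : ℝ) else -1) * (f (p.1 i) - f (p.2 i))
        = ((m : ℝ)⁻¹ * ∑ i : Fin m, (if ε i then (1 : ℝ) else -1) * f (p.1 i))
          - ((m : ℝ)⁻¹ * ∑ i : Fin m, (if ε i then (1 : ℝ) else -1) * f (p.2 i)) := by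
      rw [← mul_sub, ← Finset.sum_sub_distrib]
      congr 1
      refine Finset.sum_congr rfl fun i _ => by ring
    dsimp only
    rw [hsplit]
    exact (abs_sub_le_abs_add_abs _ _).trans
      (add_le_add (hRmem f hf p.1) (hRmem f hf p.2))
  have e1 : ∫ p : (Fin m → X) × (Fin m → X), SR p.1 ∂(P.prod P) = ∫ x, SR x ∂P := by
    rw [integral_prod _ h1]
    simp [integral_const, measure_univ]
  have e2 : ∫ p : (Fin m → X) × (Fin m → X), SR p.2 ∂(P.prod P) = ∫ x, SR x ∂P := by
    rw [integral_prod _ h2]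
    simp [integral_const, measure_univ]
  calc ∫ p : (Fin m → X) × (Fin m → X),
      sSup ((fun f => |(m : ℝ)⁻¹ * ∑ i : Fin m,
        (if ε i then (1 : ℝ) else -1) * (f (p.1 i) - f (p.2 i))|) '' F) ∂(P.prod P)
      ≤ ∫ p : (Fin m → X) × (Fin m → X), (SR p.1 + SR p.2) ∂(P.prod P) :=
        integral_mono hJint (h1.add h2) hpt
    _ = (∫ p : (Fin m → X) × (Fin m → X), SR p.1 ∂(P.prod P))
        + ∫ p : (Fin m → X) × (Fin m → X), SR p.2 ∂(P.prod P) := integral_add h1 h2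
    _ = 2 * ∫ x, SR x ∂P := by rw [e1, e2]; ring

lemma stepDE {X : Type*} [MeasurableSpace X] (μ : Measure X) [IsProbabilityMeasure μ]
    {F : Set (X → ℝ)} (hFcount : F.Countable) (hFmeas : ∀ f ∈ F, Measurable f)
    {ν : ℝ} (hν0 : 0 ≤ ν) (hν : ∀ f ∈ F, ∀ x, |f x| ≤ ν) {m : ℕ} :
    ∫ p : (Fin m → X) × (Fin m → X),
      sSup ((fun f => |(m : ℝ)⁻¹ * ∑ i : Fin m, (f (p.1 i) - f (p.2 i))|) '' F)
      ∂((Measure.pi fun _ : Fin m => μ).prod (Measure.pi fun _ : Fin m => μ))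
    ≤ 2 * rademacher μ m F := by
  classical
  set P : Measure (Fin m → X) := Measure.pi fun _ : Fin m => μ with hPdef
  haveI : IsProbabilityMeasure P := by rw [hPdef]; infer_instance
  set U : Measure (Fin m → Bool) :=
    Measure.pi fun _ : Fin m => (PMF.uniformOfFintype Bool).toMeasure with hUdef
  haveI : IsProbabilityMeasure U := by rw [hUdef]; infer_instance
  have hone : ∀ (ε : Fin m → Bool) (i : Fin m), |if ε i then (1 : ℝ) else -1| = 1 := by
    intro ε i; by_cases h : ε i <;> simp [h]
  have hSR := fun ε : Fin m → Bool =>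
    sup_family (α := Fin m → X) hFcount
      (fun f x => (m : ℝ)⁻¹ * ∑ i : Fin m, (if ε i then (1 : ℝ) else -1) * f (x i))
      (fun f hf => measurable_const.mul (Finset.measurable_sum _ fun i _ =>
        measurable_const.mul ((hFmeas f hf).comp (measurable_pi_apply i))))
      (C := ν) hν0
      (fun f hf x => abs_inv_mul_sum_le _ hν0 (fun i => by
        rw [abs_mul, hone ε i, one_mul]; exact hν f hf _))
  set A : (Fin m → Bool) → ℝ := fun ε => ∫ x : Fin m → X,
    sSup ((fun f => |(m : ℝ)⁻¹ * ∑ i : Fin m,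
      (if ε i then (1 : ℝ) else -1) * f (x i)|) '' F) ∂P with hAdef
  have hAnn : ∀ ε, 0 ≤ A ε := fun ε => integral_nonneg fun x => (hSR ε).2.1 x
  have hAle : ∀ ε, A ε ≤ ν := by
    intro ε
    have hint : Integrable (fun x : Fin m → X =>
        sSup ((fun f => |(m : ℝ)⁻¹ * ∑ i : Fin m,
          (if ε i then (1 : ℝ) else -1) * f (x i)|) '' F)) P :=
      integrable_of_bounded_meas (hSR ε).1
        (fun x => abs_le_of_nonneg_le ((hSR ε).2.1 x) ((hSR ε).2.2.1 x))
    calc A ε ≤ ∫ _x : Fin m → X, ν ∂P :=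
          integral_mono hint (integrable_const ν) ((hSR ε).2.2.1)
      _ = ν := by simp [measure_univ]
  have hAint : Integrable A U :=
    integrable_of_bounded_meas (measurable_of_countable A)
      (fun ε => abs_le_of_nonneg_le (hAnn ε) (hAle ε))
  obtain ⟨hPmeas, hPnn, hPle, _⟩ :=
    sup_family (α := (Fin m → X) × (Fin m → Bool)) hFcount
      (fun f ω => (m : ℝ)⁻¹ * ∑ i : Fin m, (if ω.2 i then (1 : ℝ) else -1) * f (ω.1 i))
      (fun f hf => measurable_const.mul (Finset.measurable_sum _ fun i _ =>
        ((measurable_of_countable (fun b : Bool => if b then (1 : ℝ) else -1)).comp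
          ((measurable_pi_apply i).comp measurable_snd)).mul
        ((hFmeas f hf).comp ((measurable_pi_apply i).comp measurable_fst))))
      (C := ν) hν0
      (fun f hf ω => abs_inv_mul_sum_le _ hν0 (fun i => by
        rw [abs_mul, hone ω.2 i, one_mul]; exact hν f hf _))
  have hRadint : Integrable (fun ω : (Fin m → X) × (Fin m → Bool) =>
      sSup ((fun f => |(m : ℝ)⁻¹ * ∑ i : Fin m,
        (if ω.2 i then (1 : ℝ) else -1) * f (ω.1 i)|) '' F)) (P.prod U) :=
    integrable_of_bounded_meas hPmeas (fun ω => abs_le_of_nonneg_le (hPnn ω) (hPle ω))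
  have hrad : rademacher μ m F = ∫ ε, A ε ∂U := by
    have h1 : rademacher μ m F = ∫ ω : (Fin m → X) × (Fin m → Bool),
        sSup ((fun f => |(m : ℝ)⁻¹ * ∑ i : Fin m,
          (if ω.2 i then (1 : ℝ) else -1) * f (ω.1 i)|) '' F) ∂(P.prod U) := rfl
    rw [h1, integral_prod_symm _ hRadint]
  have hkey : ∀ ε : Fin m → Bool,
      (∫ p : (Fin m → X) × (Fin m → X),
        sSup ((fun f => |(m : ℝ)⁻¹ * ∑ i : Fin m, (f (p.1 i) - f (p.2 i))|) '' F)
        ∂(P.prod P)) ≤ 2 * A ε := by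
    intro ε
    calc (∫ p : (Fin m → X) × (Fin m → X),
        sSup ((fun f => |(m : ℝ)⁻¹ * ∑ i : Fin m, (f (p.1 i) - f (p.2 i))|) '' F)
        ∂(P.prod P))
        = ∫ p : (Fin m → X) × (Fin m → X),
          sSup ((fun f => |(m : ℝ)⁻¹ * ∑ i : Fin m,
            (if ε i then (1 : ℝ) else -1) * (f (p.1 i) - f (p.2 i))|) '' F)
          ∂(P.prod P) := stepB μ F ε
      _ ≤ 2 * A ε := stepC μ hFcount hFmeas hν0 hν ε
  calc (∫ p : (Fin m → X) × (Fin m → X),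
      sSup ((fun f => |(m : ℝ)⁻¹ * ∑ i : Fin m, (f (p.1 i) - f (p.2 i))|) '' F)
      ∂(P.prod P))
      = ∫ _ε : Fin m → Bool, (∫ p : (Fin m → X) × (Fin m → X),
          sSup ((fun f => |(m : ℝ)⁻¹ * ∑ i : Fin m, (f (p.1 i) - f (p.2 i))|) '' F)
          ∂(P.prod P)) ∂U := by
        rw [integral_const]; simp [measure_univ]
    _ ≤ ∫ ε, 2 * A ε ∂U :=
        integral_mono (integrable_const _) (hAint.const_mul 2) hkey
    _ = 2 * ∫ ε, A ε ∂U := integral_const_mul 2 A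
    _ = 2 * rademacher μ m F := by rw [hrad]

/-- symmetrization: the expected supremum of the empirical
deviations is at most twice the Rademacher complexity. -/
theorem expected_sup_deviation_le_two_rademacher
    {X : Type*} [MeasurableSpace X] (μ : Measure X) [IsProbabilityMeasure μ]
    (F : Set (X → ℝ)) (hFcount : F.Countable)
    (hFmeas : ∀ f ∈ F, Measurable f)
    (ν : ℝ) (hν : ∀ f ∈ F, ∀ x, |f x| ≤ ν)
    (m : ℕ) (hm : 0 < m) :
    (∫ x : Fin m → X,
        sSup ((fun f =>
          |((m : ℝ)⁻¹ * ∑ i : Fin m, f (x i)) - ∫ z, f z ∂μ|) '' F)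
        ∂(Measure.pi fun _ => μ)) ≤ 2 * rademacher μ m F := by
  rcases Set.eq_empty_or_nonempty F with rfl | hFne
  · simp [rademacher, Set.image_empty, Real.sSup_empty]
  obtain ⟨f₀, hf₀⟩ := hFne
  have hXne : Nonempty X := by
    by_contra h
    rw [not_nonempty_iff] at h
    have h1 : μ Set.univ = 1 := measure_univ
    rw [Set.univ_eq_empty_iff.mpr h] at h1
    simp at h1
  have hν0 : 0 ≤ ν := (abs_nonneg _).trans (hν f₀ hf₀ (Classical.arbitrary X))
  exact (stepA μ hFcount hFmeas hν0 hν hm).trans (stepDE μ hFcount hFmeas hν0 hν)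
end
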